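/- For a sequence a : ℕ → Ordinal, the set E_a = {i : ℕ | ε_a ≤ a i} is finite; define Λ a to be the Hessenberg natural sum of the initial ordinal of the ε_a-th aleph, ord(ℵ_{ε_a}), with the Hessenberg natural sum of the ordinals a i over i ∈ E_a. Then Λ is weakly monotone and strictly monotone on e-special elements. -/

import Mathlib

universe u

/-- The Hessenberg natural sum of ordinals (as `Ordinal.nadd` in the older Mathlib). -/
noncomputable def Ordinal.nadd (a b : Ordinal.{u}) : Ordinal.{u} :=
  max (⨆ x : Set.Iio a, Order.succ (Ordinal.nadd x.1 b))
    (⨆ x : Set.Iio b, Order.succ (Ordinal.nadd a x.1))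
termination_by (a, b)
decreasing_by all_goals cases x; decreasing_tactic

namespace NaturalOps

infixl:65 " ♯ " => Ordinal.nadd

theorem lt_nadd_iff {x a b : Ordinal.{u}} :
    x < a ♯ b ↔ (∃ a' < a, x ≤ a' ♯ b) ∨ ∃ b' < b, x ≤ a ♯ b' := by
  rw [Ordinal.nadd, lt_max_iff, lt_ciSup_iff' Ordinal.bddAbove_of_small,
    lt_ciSup_iff' Ordinal.bddAbove_of_small]
  simp only [Order.lt_succ_iff, Subtype.exists, Set.mem_Iio, exists_prop]

theorem nadd_le_iff {x a b : Ordinal.{u}} :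
    a ♯ b ≤ x ↔ (∀ a' < a, a' ♯ b < x) ∧ ∀ b' < b, a ♯ b' < x := by
  rw [← not_lt, lt_nadd_iff]
  simp only [not_or, not_exists, not_and, not_le]

theorem nadd_lt_nadd_right {a a' : Ordinal.{u}} (h : a' < a) (b : Ordinal.{u}) :
    a' ♯ b < a ♯ b :=
  lt_nadd_iff.2 (Or.inl ⟨a', h, le_rfl⟩)

theorem nadd_lt_nadd_left {b b' : Ordinal.{u}} (h : b' < b) (a : Ordinal.{u}) :
    a ♯ b' < a ♯ b :=
  lt_nadd_iff.2 (Or.inr ⟨b', h, le_rfl⟩)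

theorem nadd_le_nadd {a a' b b' : Ordinal.{u}} (ha : a' ≤ a) (hb : b' ≤ b) :
    a' ♯ b' ≤ a ♯ b := by
  rcases ha.lt_or_eq with ha | rfl
  · rcases hb.lt_or_eq with hb | rfl
    · exact ((nadd_lt_nadd_left hb _).trans (nadd_lt_nadd_right ha _)).le
    · exact (nadd_lt_nadd_right ha _).le
  · rcases hb.lt_or_eq with hb | rfl
    · exact (nadd_lt_nadd_left hb _).le
    · exact le_rfl

theorem zero_nadd (a : Ordinal.{u}) : 0 ♯ a = a := by
  refine le_antisymm (nadd_le_iff.2 ⟨fun a' h => absurd h (by simp),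
    fun b' h => (zero_nadd b').symm ▸ h⟩) (le_of_forall_lt fun b' h => ?_)
  have := nadd_lt_nadd_left h 0
  rwa [zero_nadd b'] at this
termination_by a

theorem nadd_comm (a b : Ordinal.{u}) : a ♯ b = b ♯ a :=
  le_antisymm
    (nadd_le_iff.2 ⟨fun a' h => (nadd_comm a' b).trans_lt (nadd_lt_nadd_left h b),
      fun b' h => (nadd_comm a b').trans_lt (nadd_lt_nadd_right h a)⟩)
    (nadd_le_iff.2 ⟨fun b' h => (nadd_comm a b').symm.trans_lt (nadd_lt_nadd_left h a),
      fun a' h => (nadd_comm a' b).symm.trans_lt (nadd_lt_nadd_right h b)⟩)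
termination_by (a, b)

theorem nadd_zero (a : Ordinal.{u}) : a ♯ 0 = a := by
  rw [nadd_comm, zero_nadd]

theorem nadd_assoc (a b c : Ordinal.{u}) : a ♯ b ♯ c = a ♯ (b ♯ c) := by
  apply le_antisymm
  · refine nadd_le_iff.2 ⟨fun x hx => ?_, fun c' hc => ?_⟩
    · rcases lt_nadd_iff.1 hx with ⟨a', ha, hx⟩ | ⟨b', hb, hx⟩
      · exact (nadd_le_nadd hx le_rfl).trans_lt
          ((nadd_assoc a' b c).symm ▸ nadd_lt_nadd_right ha _)
      · exact (nadd_le_nadd hx le_rfl).trans_lt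
          ((nadd_assoc a b' c).symm ▸ nadd_lt_nadd_left (nadd_lt_nadd_right hb c) a)
    · exact (nadd_assoc a b c').symm ▸ nadd_lt_nadd_left (nadd_lt_nadd_left hc b) a
  · refine nadd_le_iff.2 ⟨fun a' ha => ?_, fun x hx => ?_⟩
    · exact (nadd_assoc a' b c) ▸ nadd_lt_nadd_right (nadd_lt_nadd_right ha b) c
    · rcases lt_nadd_iff.1 hx with ⟨b', hb, hx⟩ | ⟨c', hc, hx⟩
      · exact (nadd_le_nadd le_rfl hx).trans_lt
          ((nadd_assoc a b' c) ▸ nadd_lt_nadd_right (nadd_lt_nadd_left hb a) c)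
      · exact (nadd_le_nadd le_rfl hx).trans_lt
          ((nadd_assoc a b c') ▸ nadd_lt_nadd_left hc _)
termination_by (a, b, c)

end NaturalOps

/-- A type synonym for ordinals with natural (Hessenberg) addition, as in the older Mathlib. -/
def NatOrdinal : Type (u + 1) := Ordinal.{u}

noncomputable instance NatOrdinal.instLinearOrder : LinearOrder NatOrdinal.{u} :=
  inferInstanceAs (LinearOrder Ordinal.{u})

instance NatOrdinal.instZero : Zero NatOrdinal.{u} := ⟨(0 : Ordinal.{u})⟩

noncomputable instance NatOrdinal.instAdd : Add NatOrdinal.{u} := ⟨Ordinal.nadd⟩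

noncomputable instance NatOrdinal.instAddCommMonoid : AddCommMonoid NatOrdinal.{u} where
  add_assoc := NaturalOps.nadd_assoc
  zero_add := NaturalOps.zero_nadd
  add_zero := NaturalOps.nadd_zero
  add_comm := NaturalOps.nadd_comm
  nsmul := nsmulRec
  nsmul_zero := fun _ => rfl
  nsmul_succ := fun _ _ => rfl

/-- The identity function between `Ordinal` and `NatOrdinal`. -/
noncomputable def Ordinal.toNatOrdinal : Ordinal.{u} ≃o NatOrdinal.{u} := OrderIso.refl _

/-- The identity function between `NatOrdinal` and `Ordinal`. -/
noncomputable def NatOrdinal.toOrdinal : NatOrdinal.{u} ≃o Ordinal.{u} := OrderIso.refl _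


open NaturalOps

/-- `ε_a`: the least ordinal `ε` such that `{i | ε ≤ a i}` is finite. -/
noncomputable def epsSeq (a : ℕ → Ordinal) : Ordinal :=
  sInf {ε : Ordinal | {i : ℕ | ε ≤ a i}.Finite}

lemma epsSet_nonempty (a : ℕ → Ordinal) :
    {ε : Ordinal | {i : ℕ | ε ≤ a i}.Finite}.Nonempty := by
  refine ⟨(⨆ i, a i) + 1, ?_⟩
  have h : {i : ℕ | (⨆ i, a i) + 1 ≤ a i} = ∅ := by
    ext i
    simp only [Set.mem_setOf_eq, Set.mem_empty_iff_false, iff_false, not_le]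
    exact (Ordinal.le_iSup a i).trans_lt (by
      rw [Ordinal.add_one_eq_succ]; exact Order.lt_succ _)
  show {i : ℕ | (⨆ i, a i) + 1 ≤ a i}.Finite
  rw [h]
  exact Set.finite_empty

/-- The set `E_a` of indices of e-special elements is finite. -/
lemma E_finite (a : ℕ → Ordinal) : {i : ℕ | epsSeq a ≤ a i}.Finite :=
  csInf_mem (epsSet_nonempty a)

/-- `Λ a` is the Hessenberg natural sum of `ord ℵ_{ε_a}` with the (finite) Hessenberg
natural sum of the e-special elements of `a`, i.e. the `a i` for `i ∈ E_a`. -/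
noncomputable def Lambda (a : ℕ → Ordinal) : Ordinal :=
  (Cardinal.aleph (epsSeq a)).ord ♯
    NatOrdinal.toOrdinal (∑ i ∈ (E_finite a).toFinset, Ordinal.toNatOrdinal (a i))

/-- `S` is weakly monotone. -/
def WeaklyMonotone (S : (ℕ → Ordinal) → Ordinal) : Prop :=
  ∀ a b : ℕ → Ordinal, (∀ i, a i ≤ b i) → S a ≤ S b

/-- `S` is strictly monotone on e-special elements. -/
def StrictMonoOnESpecial (S : (ℕ → Ordinal) → Ordinal) : Prop :=
  ∀ a b : ℕ → Ordinal, (∀ i, a i ≤ b i) →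
    (∃ j : ℕ, epsSeq a ≤ b j ∧ a j < b j) → S a < S b

open NaturalOps Ordinal Cardinal Order

noncomputable instance NatOrdinal.instIsOrderedCancelAddMonoid :
    IsOrderedCancelAddMonoid NatOrdinal.{u} where
  add_le_add_left := fun _ _ h c => nadd_le_nadd h le_rfl
  le_of_add_le_add_left := fun a b c h => by
    by_contra hcon
    exact (not_lt.2 h) (nadd_lt_nadd_left (not_le.1 hcon) a)

lemma nadd_lt_ord_of_isRegular {c : Cardinal} (hc : c.IsRegular) :
    ∀ a b : Ordinal, a < c.ord → b < c.ord → a ♯ b < c.ord := by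
  intro a b
  induction a using Ordinal.induction generalizing b with
  | h a IHa =>
  induction b using Ordinal.induction with
  | h b IHb =>
  intro ha hb
  rw [Ordinal.nadd]
  have hlim := Cardinal.isSuccLimit_ord hc.aleph0_le
  apply max_lt
  · apply Ordinal.lift_iSup_lt_of_lt_cof
    · simpa [Cardinal.mk_Iio_ordinal, ← Cardinal.lift_ord, ← Ordinal.lift_cof,
        ← Ordinal.lift_card, hc.cof_ord] using Cardinal.lt_ord.1 ha
    · intro i; exact hlim.succ_lt (IHa i.1 i.2 b (i.2.trans ha) hb)
  · apply Ordinal.lift_iSup_lt_of_lt_cof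
    · simpa [Cardinal.mk_Iio_ordinal, ← Cardinal.lift_ord, ← Ordinal.lift_cof,
        ← Ordinal.lift_card, hc.cof_ord] using Cardinal.lt_ord.1 hb
    · intro i; exact hlim.succ_lt (IHb i.1 i.2 ha (i.2.trans hb))

lemma nadd_lt_ord {c : Cardinal} (hc : ℵ₀ < c) {a b : Ordinal}
    (ha : a < c.ord) (hb : b < c.ord) : a ♯ b < c.ord := by
  have hreg : (succ (a.card + b.card + ℵ₀)).IsRegular :=
    Cardinal.isRegular_succ le_add_self
  have h1 : a ♯ b < (succ (a.card + b.card + ℵ₀)).ord := by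
    apply nadd_lt_ord_of_isRegular hreg <;> rw [Cardinal.lt_ord] <;> apply lt_succ_of_le
    · exact le_add_right le_self_add
    · exact le_add_right le_add_self
  rw [Cardinal.lt_ord] at h1 ⊢
  rw [lt_succ_iff] at h1
  refine h1.trans_lt ?_
  apply Cardinal.add_lt_of_lt hc.le (Cardinal.add_lt_of_lt hc.le ?_ ?_) hc <;>
    rw [← Cardinal.lt_ord] <;> assumption

lemma toOrdinal_sum_lt_ord {c : Cardinal} (hc : ℵ₀ < c) (s : Finset ℕ) (f : ℕ → NatOrdinal)
    (h : ∀ i ∈ s, NatOrdinal.toOrdinal (f i) < c.ord) :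
    NatOrdinal.toOrdinal (∑ i ∈ s, f i) < c.ord := by
  induction s using Finset.induction with
  | empty =>
      rw [Finset.sum_empty]
      show (0 : Ordinal) < c.ord
      rw [Cardinal.lt_ord, Ordinal.card_zero]
      exact aleph0_pos.trans hc
  | insert j t hni IH =>
      rw [Finset.sum_insert hni]
      have : NatOrdinal.toOrdinal (f j + ∑ i ∈ t, f i)
          = NatOrdinal.toOrdinal (f j) ♯ NatOrdinal.toOrdinal (∑ i ∈ t, f i) :=
        rfl
      rw [this]
      exact nadd_lt_ord hc (h j (Finset.mem_insert_self j t))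
        (IH fun i hi => h i (Finset.mem_insert_of_mem hi))
open Ordinal Cardinal Order

lemma eps_mono {a b : ℕ → Ordinal} (hab : ∀ i, a i ≤ b i) : epsSeq a ≤ epsSeq b := by
  apply csInf_le_csInf (OrderBot.bddBelow _) (epsSet_nonempty b)
  intro ε hε
  exact hε.subset fun i hi => le_trans hi (hab i)

lemma eps_pos (a : ℕ → Ordinal) : 0 < epsSeq a := by
  rw [pos_iff_ne_zero]
  intro h
  have := E_finite a
  rw [h] at this
  have huniv : {i : ℕ | (0 : Ordinal) ≤ a i} = Set.univ := by
    ext i; simp [zero_le]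
  rw [huniv] at this
  exact Set.infinite_univ this

lemma nonneg' (x : NatOrdinal) : 0 ≤ x := (zero_le : (0 : Ordinal) ≤ NatOrdinal.toOrdinal x)

lemma lambda_main (a b : ℕ → Ordinal) (hab : ∀ i, a i ≤ b i) :
    Lambda a ≤ Lambda b ∧ ((∃ j, epsSeq a ≤ b j ∧ a j < b j) → Lambda a < Lambda b) := by
  classical
  set A := (E_finite a).toFinset with hA
  set B := (E_finite b).toFinset with hB
  have hmemA : ∀ i, i ∈ A ↔ epsSeq a ≤ a i := fun i => Set.Finite.mem_toFinset _
  have hmemB : ∀ i, i ∈ B ↔ epsSeq b ≤ b i := fun i => Set.Finite.mem_toFinset _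
  have hε := eps_mono hab
  have hLa : Lambda a = NatOrdinal.toOrdinal
      (Ordinal.toNatOrdinal (Cardinal.aleph (epsSeq a)).ord
        + ∑ i ∈ A, Ordinal.toNatOrdinal (a i)) := rfl
  have hLb : Lambda b = NatOrdinal.toOrdinal
      (Ordinal.toNatOrdinal (Cardinal.aleph (epsSeq b)).ord
        + ∑ i ∈ B, Ordinal.toNatOrdinal (b i)) := rfl
  have h1 : ∑ i ∈ A ∩ B, Ordinal.toNatOrdinal (a i) ≤ ∑ i ∈ B, Ordinal.toNatOrdinal (b i) :=
    (Finset.sum_le_sum (f := fun i => Ordinal.toNatOrdinal (a i))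
      (g := fun i => Ordinal.toNatOrdinal (b i)) fun i _ => hab i).trans
      (Finset.sum_le_sum_of_subset_of_nonneg Finset.inter_subset_right
        fun i _ _ => nonneg' _)
  rcases eq_or_lt_of_le hε with heq | hlt
  · -- the two epsilons agree
    have hAB : A ⊆ B := by
      intro i hi
      rw [hmemB]
      exact heq ▸ ((hmemA i).1 hi).trans (hab i)
    have hsum : ∑ i ∈ A, Ordinal.toNatOrdinal (a i) ≤ ∑ i ∈ B, Ordinal.toNatOrdinal (b i) :=
      (Finset.sum_le_sum (f := fun i => Ordinal.toNatOrdinal (a i))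
      (g := fun i => Ordinal.toNatOrdinal (b i)) fun i _ => hab i).trans
        (Finset.sum_le_sum_of_subset_of_nonneg hAB fun i _ _ => nonneg' _)
    constructor
    · rw [hLa, hLb, NatOrdinal.toOrdinal.le_iff_le, heq]
      exact add_le_add_right hsum _
    · rintro ⟨j, hj1, hj2⟩
      have hjB : j ∈ B := (hmemB j).2 (heq ▸ hj1)
      have hsum' : ∑ i ∈ A, Ordinal.toNatOrdinal (a i)
          < ∑ i ∈ B, Ordinal.toNatOrdinal (b i) := by
        by_cases hjA : j ∈ A
        · exact lt_of_lt_of_le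
            (Finset.sum_lt_sum (fun i _ => hab i) ⟨j, hjA, hj2⟩)
            (Finset.sum_le_sum_of_subset_of_nonneg hAB fun i _ _ => nonneg' _)
        · have hAe : A ⊆ B.erase j := fun i hi =>
            Finset.mem_erase.2 ⟨fun h => hjA (h ▸ hi), hAB hi⟩
          have step1 : ∑ i ∈ A, Ordinal.toNatOrdinal (a i)
              ≤ ∑ i ∈ B.erase j, Ordinal.toNatOrdinal (b i) :=
            (Finset.sum_le_sum (f := fun i => Ordinal.toNatOrdinal (a i))
      (g := fun i => Ordinal.toNatOrdinal (b i)) fun i _ => hab i).trans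
              (Finset.sum_le_sum_of_subset_of_nonneg hAe fun i _ _ => nonneg' _)
          have step2 : ∑ i ∈ B.erase j, Ordinal.toNatOrdinal (b i)
              < ∑ i ∈ B, Ordinal.toNatOrdinal (b i) := by
            rw [← Finset.sum_erase_add B _ hjB]
            have hbj : (0 : NatOrdinal) < Ordinal.toNatOrdinal (b j) :=
              lt_of_le_of_lt (nonneg' _) hj2
            exact lt_add_of_pos_right _ hbj
          exact step1.trans_lt step2
      rw [hLa, hLb, NatOrdinal.toOrdinal.lt_iff_lt, heq]
      exact add_lt_add_right hsum' _
  · -- epsSeq a < epsSeq b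
    have hℵ : ℵ₀ < Cardinal.aleph (epsSeq b) := by
      rw [← Cardinal.aleph_zero]
      exact Cardinal.aleph_lt_aleph.2 (eps_pos b)
    have key : Ordinal.toNatOrdinal (Cardinal.aleph (epsSeq a)).ord
        + ∑ i ∈ A \ B, Ordinal.toNatOrdinal (a i)
        < Ordinal.toNatOrdinal (Cardinal.aleph (epsSeq b)).ord := by
      rw [← NatOrdinal.toOrdinal.lt_iff_lt]
      have : NatOrdinal.toOrdinal (Ordinal.toNatOrdinal (Cardinal.aleph (epsSeq a)).ord
          + ∑ i ∈ A \ B, Ordinal.toNatOrdinal (a i))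
          = (Cardinal.aleph (epsSeq a)).ord ♯
            NatOrdinal.toOrdinal (∑ i ∈ A \ B, Ordinal.toNatOrdinal (a i)) :=
        rfl
      rw [this]
      apply nadd_lt_ord hℵ
      · exact Cardinal.ord_lt_ord.2 (Cardinal.aleph_lt_aleph.2 hlt)
      · apply toOrdinal_sum_lt_ord hℵ
        intro i hi
        rcases Finset.mem_sdiff.1 hi with ⟨-, hiB⟩
        have hbi : b i < epsSeq b := lt_of_not_ge fun h => hiB ((hmemB i).2 h)
        calc NatOrdinal.toOrdinal (Ordinal.toNatOrdinal (a i)) = a i := rfl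
          _ ≤ b i := hab i
          _ < epsSeq b := hbi
          _ ≤ (Cardinal.aleph (epsSeq b)).ord := by
              rw [Cardinal.ord_aleph]; exact Ordinal.le_omega_self _
    have hstrict : Lambda a < Lambda b := by
      rw [hLa, hLb, NatOrdinal.toOrdinal.lt_iff_lt]
      have hsplit : ∑ i ∈ A, Ordinal.toNatOrdinal (a i)
          = ∑ i ∈ A ∩ B, Ordinal.toNatOrdinal (a i)
            + ∑ i ∈ A \ B, Ordinal.toNatOrdinal (a i) :=
        (Finset.sum_inter_add_sum_sdiff A B _).symm
      rw [hsplit]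
      calc Ordinal.toNatOrdinal (Cardinal.aleph (epsSeq a)).ord
            + (∑ i ∈ A ∩ B, Ordinal.toNatOrdinal (a i)
              + ∑ i ∈ A \ B, Ordinal.toNatOrdinal (a i))
          = (Ordinal.toNatOrdinal (Cardinal.aleph (epsSeq a)).ord
              + ∑ i ∈ A \ B, Ordinal.toNatOrdinal (a i))
            + ∑ i ∈ A ∩ B, Ordinal.toNatOrdinal (a i) := by abel
        _ < Ordinal.toNatOrdinal (Cardinal.aleph (epsSeq b)).ord
            + ∑ i ∈ A ∩ B, Ordinal.toNatOrdinal (a i) := add_lt_add_left key _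
        _ ≤ Ordinal.toNatOrdinal (Cardinal.aleph (epsSeq b)).ord
            + ∑ i ∈ B, Ordinal.toNatOrdinal (b i) := add_le_add_right h1 _
    exact ⟨hstrict.le, fun _ => hstrict⟩

/-- For every sequence `a` the set `E_a` is finite, and the operation `Λ` is weakly
monotone and strictly monotone on e-special elements. -/
theorem Lambda_weaklyMonotone_strictMonoOnESpecial :
    (∀ a : ℕ → Ordinal, {i : ℕ | epsSeq a ≤ a i}.Finite) ∧
      WeaklyMonotone Lambda ∧ StrictMonoOnESpecial Lambda :=
  ⟨E_finite, fun a b hab => (lambda_main a b hab).1,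
    fun a b hab h => (lambda_main a b hab).2 h⟩
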